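/- If g is a computably transparent and inflationary partial multifunction on ℕ, then id ⊔ g ≤_m g and pWeih(g) ≤_m g; consequently, for all partial multifunctions f,g on ℕ with g computably transparent and inflationary, f ≤_m g if and only if pWeih(f) ≤_m g (i.e., pWeih is left adjoint to the inclusion of the computably transparent, inflationary partial multifunctions into all partial multifunctions, both preordered by ≤_m). -/

import Mathlib

namespace KleeneOracle

/-- `e ∗ x`: application of the `e`-th partial computable function on ℕ. -/
def ap (e x : ℕ) : Part ℕ :=
  Nat.Partrec.Code.eval (Denumerable.ofNat Nat.Partrec.Code e) x

/-- `e ∗ A := {e ∗ a : a ∈ A}`. -/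
def apSet (e : ℕ) (A : Set ℕ) : Set ℕ := {z | ∃ a ∈ A, z ∈ ap e a}

/-- A partial multifunction on ℕ. -/
abbrev Multifun := ℕ → Part (Set ℕ)

def Transparent (U : Multifun) : Prop :=
  ∃ u : ℕ, ∀ (e x : ℕ) (A : Set ℕ), A ∈ U x → (∀ y ∈ A, (ap e y).Dom) →
    ∃ c ∈ ap u e, ∃ d ∈ ap c x, ∃ B ∈ U d, B ⊆ apSet e A

def Inflationary (U : Multifun) : Prop :=
  ∃ η : ℕ, ∀ x : ℕ, ∃ c ∈ ap η x, ∃ B ∈ U c, B ⊆ {x}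

def mcomp (g f : Multifun) : Multifun := fun x =>
  ⟨∃ A ∈ f x, ∀ y ∈ A, (g y).Dom,
   fun _ => {z | ∃ A ∈ f x, ∃ y ∈ A, ∃ B ∈ g y, z ∈ B}⟩

def Idempotent (U : Multifun) : Prop :=
  ∃ μ : ℕ, ∀ (x : ℕ) (A : Set ℕ), A ∈ mcomp U U x →
    ∃ c ∈ ap μ x, ∃ B ∈ U c, B ⊆ A

def mRed (f g : Multifun) : Prop :=
  ∃ e : ℕ, ∀ (x : ℕ) (A : Set ℕ), A ∈ f x →
    ∃ c ∈ ap e x, ∃ B ∈ g c, B ⊆ A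

def wRed (f g : Multifun) : Prop :=
  ∃ em ep : ℕ, ∀ (x : ℕ) (A : Set ℕ), A ∈ f x →
    ∃ c ∈ ap em x, ∃ B ∈ g c, ∀ y ∈ B, ∃ z ∈ ap ep (Nat.pair x y), z ∈ A

def Weih (g : Multifun) : Multifun := fun w =>
  ⟨∃ c ∈ ap w.unpair.1 w.unpair.2.unpair.2, ∃ B ∈ g c,
     ∀ y ∈ B, (ap w.unpair.2.unpair.1 (Nat.pair w.unpair.2.unpair.2 y)).Dom,
   fun _ => {z | ∃ c ∈ ap w.unpair.1 w.unpair.2.unpair.2, ∃ B ∈ g c,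
     ∃ y ∈ B, z ∈ ap w.unpair.2.unpair.1 (Nat.pair w.unpair.2.unpair.2 y)}⟩

def idsq (g : Multifun) : Multifun := fun w =>
  if w.unpair.1 = 0 then Part.some {w.unpair.2}
  else if w.unpair.1 = 1 then g w.unpair.2
  else Part.none

def pWeih (g : Multifun) : Multifun := Weih (idsq g)

def pwRed (f g : Multifun) : Prop := wRed f (idsq g)

def Med (Q : Set ℕ) : Multifun := fun e =>
  ⟨∀ a ∈ Q, (ap e a).Dom, fun _ => apSet e Q⟩

def MedRed (P Q : Set ℕ) : Prop :=
  ∃ e : ℕ, (∀ a ∈ Q, (ap e a).Dom) ∧ apSet e Q ⊆ P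

def constMF (P : Set ℕ) : Multifun := fun _ => Part.some P

def imp (p q : Set ℕ) : Set ℕ := {e | ∀ x ∈ p, ∃ z ∈ ap e x, z ∈ q}

def OpMonotone (j : Set ℕ → Set ℕ) : Prop :=
  ∃ u : ℕ, ∀ p q : Set ℕ, ∀ a ∈ imp p q, ∃ c ∈ ap u a, c ∈ imp (j p) (j q)

def OpInflationary (j : Set ℕ → Set ℕ) : Prop :=
  ∃ e : ℕ, ∀ p : Set ℕ, e ∈ imp p (j p)

def OpIdempotent (j : Set ℕ → Set ℕ) : Prop :=
  ∃ e : ℕ, ∀ p : Set ℕ, e ∈ imp (j (j p)) (j p)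

def LawvereTierney (j : Set ℕ → Set ℕ) : Prop :=
  OpMonotone j ∧ OpInflationary j ∧ OpIdempotent j

def jU (U : Multifun) (p : Set ℕ) : Set ℕ := {x | ∃ A ∈ U x, A ⊆ p}

def SingleValued (U : Multifun) : Prop := ∀ x : ℕ, ∀ A ∈ U x, ∃ y : ℕ, A = {y}

def presInter (j : Set ℕ → Set ℕ) : Prop :=
  ∀ (ι : Type) [Nonempty ι] (p : ι → Set ℕ), j (⋂ i, p i) = ⋂ i, j (p i)

def presUnion (j : Set ℕ → Set ℕ) : Prop :=
  ∀ (ι : Type) (p : ι → Set ℕ), j (⋃ i, p i) = ⋃ i, j (p i)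

def Uop (j : Set ℕ → Set ℕ) : Multifun := fun x =>
  ⟨∃ p : Set ℕ, x ∈ j p, fun _ => ⋂₀ {p : Set ℕ | x ∈ j p}⟩

def mMorphism (e : ℕ) (f g : Multifun) : Prop :=
  ∀ (x : ℕ) (A : Set ℕ), A ∈ f x → ∃ c ∈ ap e x, ∃ B ∈ g c, B ⊆ A

def rMorphism (e : ℕ) (j k : Set ℕ → Set ℕ) : Prop :=
  ∀ p : Set ℕ, e ∈ imp (j p) (k p)

def rRed (j k : Set ℕ → Set ℕ) : Prop := ∃ e : ℕ, rMorphism e j k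


/-! `pWeih f = Weih (idsq f)`, and `f ≤_m idsq f`, `f ≤_m Weih f`, which gives one direction.
For the other, an inflationary `g` absorbs the `id` summand (`f ≤_m g` gives `idsq f ≤_m g`,
using `η` on the left summand), and a computably transparent `g` absorbs Weihrauch processing
(`Weih g ≤_m g`): on `⟨h, k, x⟩` run `h` on `x`, then apply the transparency witness to an index
of `y ↦ k ∗ ⟨x, y⟩`. As `Weih` is monotone, `f ≤_m g` yields `pWeih f ≤_m Weih g ≤_m g`. -/

theorem computable_unpair_fst : Computable fun n : ℕ => n.unpair.1 :=
  Computable.fst.comp Computable.unpair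

theorem computable_unpair_snd : Computable fun n : ℕ => n.unpair.2 :=
  Computable.snd.comp Computable.unpair

theorem ap_partrec₂ : Partrec₂ ap :=
  Nat.Partrec.Code.eval_part.comp ((Computable.ofNat _).comp Computable.fst) Computable.snd

theorem ap_partrec {α : Type*} [Primcodable α] {f g : α → ℕ} (hf : Computable f)
    (hg : Computable g) : Partrec fun a => ap (f a) (g a) :=
  ap_partrec₂.comp hf hg

theorem exists_ap_eq {ψ : ℕ →. ℕ} (hψ : Partrec ψ) : ∃ e, ∀ x, ap e x = ψ x := by
  obtain ⟨c, hc⟩ := Nat.Partrec.Code.exists_code.1 (Partrec.nat_iff.1 hψ)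
  exact ⟨Encodable.encode c, fun x => by simp [ap, hc]⟩

theorem exists_computable_ap_eq {ψ : ℕ → ℕ →. ℕ} (hψ : Partrec₂ ψ) :
    ∃ s : ℕ → ℕ, Computable s ∧ ∀ n x, ap (s n) x = ψ n x := by
  obtain ⟨c, hc⟩ := Nat.Partrec.Code.exists_code.1
    (Partrec.nat_iff.1 (hψ.comp computable_unpair_fst computable_unpair_snd))
  refine ⟨fun n => Encodable.encode (c.curry n), ?_, fun n x => ?_⟩
  · exact Computable.encode.comp
      (Nat.Partrec.Code.primrec₂_curry.comp (Primrec.const c) Primrec.id).to_comp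
  · simp [ap, Nat.Partrec.Code.eval_curry, hc]

theorem mRed_of_partrec {f g : Multifun} {ψ : ℕ →. ℕ} (hψ : Partrec ψ)
    (H : ∀ x A, A ∈ f x → ∃ c ∈ ψ x, ∃ B ∈ g c, B ⊆ A) : mRed f g := by
  obtain ⟨e, he⟩ := exists_ap_eq hψ
  exact ⟨e, fun x => he x ▸ H x⟩

theorem mRed_refl (f : Multifun) : mRed f f :=
  mRed_of_partrec Partrec.some fun x A hA => ⟨x, Part.mem_some x, A, hA, le_rfl⟩

theorem mRed_trans {f g h : Multifun} (hfg : mRed f g) (hgh : mRed g h) : mRed f h := by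
  obtain ⟨e₁, he₁⟩ := hfg
  obtain ⟨e₂, he₂⟩ := hgh
  refine mRed_of_partrec (ψ := fun x => (ap e₁ x).bind (ap e₂))
    ((ap_partrec (Computable.const e₁) Computable.id).bind
      (ap_partrec (Computable.const e₂) Computable.snd)) fun x A hA => ?_
  obtain ⟨c, hc, B, hB, hBA⟩ := he₁ x A hA
  obtain ⟨d, hd, C, hC, hCB⟩ := he₂ c B hB
  exact ⟨d, Part.mem_bind_iff.2 ⟨c, hc, hd⟩, C, hC, hCB.trans hBA⟩

theorem mem_idsq_iff {g : Multifun} {w : ℕ} {A : Set ℕ} :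
    A ∈ idsq g w ↔ w.unpair.1 = 0 ∧ A = {w.unpair.2} ∨ w.unpair.1 = 1 ∧ A ∈ g w.unpair.2 := by
  unfold idsq
  split_ifs <;> simp_all [eq_comm]

theorem exists_eq_pair_pair (w : ℕ) : ∃ h k x, w = Nat.pair h (Nat.pair k x) :=
  ⟨_, _, _, by rw [Nat.pair_unpair, Nat.pair_unpair]⟩

theorem mem_weih_pair_iff {g : Multifun} {h k x : ℕ} {A : Set ℕ} :
    A ∈ Weih g (Nat.pair h (Nat.pair k x)) ↔
      (∃ c ∈ ap h x, ∃ B ∈ g c, ∀ y ∈ B, (ap k (Nat.pair x y)).Dom) ∧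
      {z | ∃ c ∈ ap h x, ∃ B ∈ g c, ∃ y ∈ B, z ∈ ap k (Nat.pair x y)} = A := by
  simp only [Weih, Nat.unpair_pair, Part.mem_mk_iff, exists_prop]

theorem mRed_idsq (f : Multifun) : mRed f (idsq f) :=
  mRed_of_partrec (Primrec₂.natPair.comp (Primrec.const 1) Primrec.id).to_comp.partrec
    fun x A hA => ⟨_, Part.mem_some _, A, mem_idsq_iff.2 (.inr (by simpa using hA)), le_rfl⟩

theorem mRed_weih (f : Multifun) : mRed f (Weih f) := by
  obtain ⟨i, hi⟩ := exists_ap_eq Partrec.some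
  obtain ⟨p, hp⟩ := exists_ap_eq (ψ := fun n => Part.some n.unpair.2)
    computable_unpair_snd.partrec
  refine mRed_of_partrec (ψ := fun x => Nat.pair i (Nat.pair p x))
    (Primrec₂.natPair.comp (Primrec.const i)
      (Primrec₂.natPair.comp (Primrec.const p) Primrec.id)).to_comp.partrec
    fun x A hA => ⟨_, Part.mem_some _, _, mem_weih_pair_iff.2 ⟨?_, rfl⟩, ?_⟩
  · exact ⟨x, by simp [hi], A, hA, fun y _ => by simp [hp]⟩
  · rintro z ⟨c, hc, B, hB, y, hy, hz⟩
    simp only [hi, hp, Part.mem_some_iff] at hc hz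
    subst hc hz
    rw [Nat.unpair_pair]
    exact Part.mem_unique hB hA ▸ hy

theorem mRed_pWeih (f : Multifun) : mRed f (pWeih f) :=
  mRed_trans (mRed_idsq f) (mRed_weih _)

theorem idsq_mRed {f g : Multifun} (hfg : mRed f g) (hg : Inflationary g) :
    mRed (idsq f) g := by
  obtain ⟨r, hr⟩ := hfg
  obtain ⟨η, hη⟩ := hg
  refine mRed_of_partrec (ψ := fun w => ap (if w.unpair.1 = 0 then η else r) w.unpair.2)
    (ap_partrec (Primrec.ite (Primrec.eq.comp (Primrec.fst.comp Primrec.unpair)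
      (Primrec.const 0)) (Primrec.const η) (Primrec.const r)).to_comp
      computable_unpair_snd) fun w A hA => ?_
  rcases mem_idsq_iff.1 hA with ⟨h₀, rfl⟩ | ⟨h₁, hA⟩
  · simpa [h₀] using hη w.unpair.2
  · simpa [h₁] using hr _ _ hA

theorem weih_mono {f g : Multifun} (hfg : mRed f g) : mRed (Weih f) (Weih g) := by
  obtain ⟨r, hr⟩ := hfg
  obtain ⟨s, hs, hsap⟩ := exists_computable_ap_eq (ψ := fun h x => (ap h x).bind (ap r))
    ((ap_partrec Computable.fst Computable.snd).bind
      (ap_partrec (Computable.const r) Computable.snd).to₂).to₂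
  refine mRed_of_partrec (ψ := fun w => Nat.pair (s w.unpair.1) w.unpair.2)
    (Primrec₂.natPair.to_comp.comp (hs.comp computable_unpair_fst)
      computable_unpair_snd).partrec fun w A hA => ?_
  obtain ⟨h, k, x, rfl⟩ := exists_eq_pair_pair w
  obtain ⟨⟨c, hc, B, hB, hdom⟩, rfl⟩ := mem_weih_pair_iff.1 hA
  obtain ⟨d, hd, C, hC, hCB⟩ := hr c B hB
  have hsd : d ∈ ap (s h) x := hsap h x ▸ Part.mem_bind_iff.2 ⟨c, hc, hd⟩
  refine ⟨_, by simp, _,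
    mem_weih_pair_iff.2 ⟨⟨d, hsd, C, hC, fun y hy => hdom y (hCB hy)⟩, rfl⟩, ?_⟩
  rintro z ⟨d', hd', C', hC', y, hy, hz⟩
  obtain rfl := Part.mem_unique hd' hsd
  obtain rfl := Part.mem_unique hC' hC
  exact ⟨c, hc, B, hB, y, hCB hy, hz⟩

theorem weih_mRed_of_transparent {g : Multifun} (hg : Transparent g) : mRed (Weih g) g := by
  obtain ⟨u, hu⟩ := hg
  obtain ⟨s, hs, hsap⟩ := exists_computable_ap_eq
    (ψ := fun n y => ap n.unpair.1 (Nat.pair n.unpair.2 y))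
    (ap_partrec (computable_unpair_fst.comp Computable.fst)
      (Primrec₂.natPair.to_comp.comp (computable_unpair_snd.comp Computable.fst)
        Computable.snd)).to₂
  have hsk : ∀ k x y, ap (s (Nat.pair k x)) y = ap k (Nat.pair x y) := by simp [hsap]
  refine mRed_of_partrec (ψ := fun w => (ap u (s w.unpair.2)).bind fun t =>
      (ap w.unpair.1 w.unpair.2.unpair.2).bind (ap t))
    ((ap_partrec (Computable.const u) (hs.comp computable_unpair_snd)).bind
      ((ap_partrec (computable_unpair_fst.comp Computable.fst)
        ((computable_unpair_snd.comp computable_unpair_snd).comp Computable.fst)).bind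
          (ap_partrec (Computable.snd.comp Computable.fst) Computable.snd).to₂).to₂)
    fun w A hA => ?_
  obtain ⟨h, k, x, rfl⟩ := exists_eq_pair_pair w
  obtain ⟨⟨c, hc, B, hB, hdom⟩, rfl⟩ := mem_weih_pair_iff.1 hA
  obtain ⟨t, ht, d, hd, C, hC, hCB⟩ := hu (s (Nat.pair k x)) c B hB (by simpa [hsk] using hdom)
  refine ⟨d, ?_, C, hC, hCB.trans ?_⟩
  · simp only [Nat.unpair_pair]
    exact Part.mem_bind_iff.2 ⟨t, ht, Part.mem_bind_iff.2 ⟨c, hc, hd⟩⟩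
  · rintro z ⟨y, hy, hz⟩
    exact ⟨c, hc, B, hB, y, hy, hsk k x y ▸ hz⟩

theorem pWeih_mRed {f g : Multifun} (hfg : mRed f g) (hT : Transparent g)
    (hI : Inflationary g) : mRed (pWeih f) g :=
  mRed_trans (weih_mono (idsq_mRed hfg hI)) (weih_mRed_of_transparent hT)

/-- If `g` is computably transparent and inflationary then
`id ⊔ g ≤_m g` and `pWeih g ≤_m g`; consequently, for all `f g` with `g` computably
transparent and inflationary, `f ≤_m g ↔ pWeih f ≤_m g`. -/
theorem pweih_left_adjoint :
    (∀ g : Multifun, Transparent g → Inflationary g →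
      mRed (idsq g) g ∧ mRed (pWeih g) g) ∧
    (∀ f g : Multifun, Transparent g → Inflationary g →
      (mRed f g ↔ mRed (pWeih f) g)) :=
  ⟨fun g hT hI => ⟨idsq_mRed (mRed_refl g) hI, pWeih_mRed (mRed_refl g) hT hI⟩,
    fun f _ hT hI => ⟨fun hfg => pWeih_mRed hfg hT hI, mRed_trans (mRed_pWeih f)⟩⟩

end KleeneOracle
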